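/- Let G = (V,E) be a graph, k a natural number, H the set of vertices of degree at least k+1, and suppose |H| ≤ k. Let G' be the graph obtained from G by deleting H and then deleting all isolated vertices. If G' has more than k·(k+1) vertices, then G has no vertex cover of size at most k. Moreover, G has a vertex cover of size at most k if and only if G' has a vertex cover of size at most k − |H|. -/
import Mathlib


/-- Buss kernel: let `H` be the set of vertices of degree at
least `k+1`, with `|H| ≤ k`, and let `G'` be `G` minus `H` and minus the then
isolated vertices (vertex set `V'`). If `G'` has more than `k(k+1)` vertices
then `G` has no vertex cover of size ≤ k; moreover `G` has a vertex cover of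
size ≤ k iff `G'` has one of size ≤ k − |H|. -/
theorem buss_kernel
    (V : Type) [Fintype V] [DecidableEq V]
    (G : SimpleGraph V) [DecidableRel G.Adj] (k : ℕ)
    (Hset : Finset V)
    (hHset : Hset = Finset.univ.filter (fun v => k + 1 ≤ G.degree v))
    (hHcard : Hset.card ≤ k)
    (V' : Finset V)
    (hV' : V' = Finset.univ.filter
      (fun v => v ∉ Hset ∧ ∃ u : V, u ∉ Hset ∧ G.Adj v u)) :
    (k * (k + 1) < V'.card →
      ¬ ∃ S : Finset V, (∀ u w : V, G.Adj u w → u ∈ S ∨ w ∈ S) ∧ S.card ≤ k) ∧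
    ((∃ S : Finset V, (∀ u w : V, G.Adj u w → u ∈ S ∨ w ∈ S) ∧ S.card ≤ k) ↔
      (∃ S' : Finset V,
        (∀ u ∈ V', ∀ w ∈ V', G.Adj u w → u ∈ S' ∨ w ∈ S') ∧
        S'.card ≤ k - Hset.card)) := by
  classical
  have hmemH : ∀ v : V, v ∈ Hset ↔ k + 1 ≤ G.degree v := by
    intro v; rw [hHset]; simp
  have hmemV' : ∀ v : V, v ∈ V' ↔ (v ∉ Hset ∧ ∃ u : V, u ∉ Hset ∧ G.Adj v u) := by
    intro v; rw [hV']; simp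
  -- Any vertex cover of size ≤ k contains Hset
  have hHS : ∀ S : Finset V, (∀ u w : V, G.Adj u w → u ∈ S ∨ w ∈ S) → S.card ≤ k →
      Hset ⊆ S := by
    intro S hcov hcard v hv
    rw [hmemH] at hv
    by_contra hvS
    have hsub : G.neighborFinset v ⊆ S := by
      intro u hu
      rw [SimpleGraph.mem_neighborFinset] at hu
      rcases hcov v u hu with h | h
      · exact absurd h hvS
      · exact h
    have hle := Finset.card_le_card hsub
    rw [SimpleGraph.card_neighborFinset_eq_degree] at hle
    omega
  constructor
  · rintro hbig ⟨S, hcov, hcard⟩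
    have hsub : V' ⊆ S ∪ (S.filter (fun u => u ∉ Hset)).biUnion (fun u => G.neighborFinset u) := by
      intro v hv
      rw [hmemV'] at hv
      obtain ⟨hvH, u, huH, hadj⟩ := hv
      by_cases hvS : v ∈ S
      · exact Finset.mem_union_left _ hvS
      · rcases hcov v u hadj with h | h
        · exact absurd h hvS
        · refine Finset.mem_union_right _ ?_
          refine Finset.mem_biUnion.2 ⟨u, Finset.mem_filter.2 ⟨h, huH⟩, ?_⟩
          rw [SimpleGraph.mem_neighborFinset]
          exact hadj.symm
    have hTcard : ((S.filter (fun u => u ∉ Hset)).biUnion (fun u => G.neighborFinset u)).card ≤ k * k := by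
      calc ((S.filter (fun u => u ∉ Hset)).biUnion (fun u => G.neighborFinset u)).card ≤ ∑ u ∈ S.filter (fun u => u ∉ Hset), (G.neighborFinset u).card :=
            Finset.card_biUnion_le
        _ ≤ ∑ _u ∈ S.filter (fun u => u ∉ Hset), k := by
            refine Finset.sum_le_sum ?_
            intro u hu
            have := (Finset.mem_filter.1 hu).2
            rw [hmemH] at this
            rw [SimpleGraph.card_neighborFinset_eq_degree]
            omega
        _ = (S.filter (fun u => u ∉ Hset)).card * k := by
            rw [Finset.sum_const, smul_eq_mul]
        _ ≤ k * k := by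
            have : (S.filter (fun u => u ∉ Hset)).card ≤ S.card :=
              Finset.card_filter_le _ _
            exact Nat.mul_le_mul (le_trans this hcard) le_rfl
    have h1 := Finset.card_le_card hsub
    have h2 := Finset.card_union_le S ((S.filter (fun u => u ∉ Hset)).biUnion (fun u => G.neighborFinset u))
    have : k * (k + 1) = k + k * k := by ring
    omega
  · constructor
    · rintro ⟨S, hcov, hcard⟩
      refine ⟨S \ Hset, ?_, ?_⟩
      · intro u hu w hw hadj
        rw [hmemV'] at hu hw
        rcases hcov u w hadj with h | h
        · exact Or.inl (Finset.mem_sdiff.2 ⟨h, hu.1⟩)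
        · exact Or.inr (Finset.mem_sdiff.2 ⟨h, hw.1⟩)
      · rw [Finset.card_sdiff_of_subset (hHS S hcov hcard)]
        omega
    · rintro ⟨S', hcov', hcard'⟩
      refine ⟨S' ∪ Hset, ?_, ?_⟩
      · intro u w hadj
        by_cases huH : u ∈ Hset
        · exact Or.inl (Finset.mem_union_right _ huH)
        by_cases hwH : w ∈ Hset
        · exact Or.inr (Finset.mem_union_right _ hwH)
        have hu : u ∈ V' := (hmemV' u).2 ⟨huH, w, hwH, hadj⟩
        have hw : w ∈ V' := (hmemV' w).2 ⟨hwH, u, huH, hadj.symm⟩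
        rcases hcov' u hu w hw hadj with h | h
        · exact Or.inl (Finset.mem_union_left _ h)
        · exact Or.inr (Finset.mem_union_left _ h)
      · have := Finset.card_union_le S' Hset
        omega
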